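/- Let 𝐂 be a locally cartesian closed category with finite products and X an object of 𝐂. Let p : A → B be orthogonal to X, let f : B → C be an arbitrary morphism, and let Π_f : 𝐂/B → 𝐂/C be the right adjoint of the pullback functor f* : 𝐂/C → 𝐂/B. Then the morphism Π_f(p) (the structure morphism of the image under Π_f of p regarded as an object of 𝐂/B) is orthogonal to X. -/

import Mathlib

/-!
Orthogonality of `p : A ⟶ B` to `X` says that precomposition with the projection
`Y ⊗ X ⟶ Y`, viewed as a morphism of `Over B`, is bijective on morphisms into `p`.
Through the adjunction `f* ⊣ Π_f`, precomposition with such a projection over `C` corresponds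
to precomposition with its pullback along `f`, and the pullback of `Y ⊗ X ⟶ Y` along `f` is
again a projection, namely `(Y ×_C B) ⊗ X ⟶ Y ×_C B` over `B`.
-/

open CategoryTheory CategoryTheory.Limits MonoidalCategory

universe v u

/-- In a category with (chosen) finite products, a morphism `p : A ⟶ B` is
*orthogonal* to an object `X` if every commuting square whose left edge is a
projection `Y ⊗ X ⟶ Y` and whose right edge is `p` has a unique diagonal filler. -/
def OrthogonalTo {𝒞 : Type u} [Category.{v} 𝒞] [CartesianMonoidalCategory 𝒞]
    {A B : 𝒞} (p : A ⟶ B) (X : 𝒞) : Prop :=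
  ∀ (Y : 𝒞) (f : Y ⊗ X ⟶ A) (g : Y ⟶ B),
    f ≫ p = CartesianMonoidalCategory.fst Y X ≫ g →
      ∃! h : Y ⟶ A, CartesianMonoidalCategory.fst Y X ≫ h = f ∧ h ≫ p = g

theorem CategoryTheory.Iso.bijective_comp_iff {𝒞 : Type u} [Category.{v} 𝒞] {Z₁ Z₂ Z W : 𝒞}
    (e : Z₁ ≅ Z₂) {m₁ : Z₁ ⟶ Z} {m₂ : Z₂ ⟶ Z} (he : e.hom ≫ m₂ = m₁) :
    Function.Bijective (fun h : Z ⟶ W => m₁ ≫ h) ↔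
      Function.Bijective (fun h : Z ⟶ W => m₂ ≫ h) := by
  have : (fun h : Z ⟶ W => m₁ ≫ h) = e.symm.homFromEquiv ∘ fun h => m₂ ≫ h := by
    funext h
    simp [← he]
  rw [this, Equiv.comp_bijective]

section

open CartesianMonoidalCategory

variable {𝒞 : Type u} [Category.{v} 𝒞] [CartesianMonoidalCategory 𝒞]

theorem CategoryTheory.CartesianMonoidalCategory.isPullback_whiskerRight_fst {P Y : 𝒞}
    (π : P ⟶ Y) (X : 𝒞) : IsPullback (π ▷ X) (fst P X) (fst Y X) π := by
  refine .of_isLimit (c := PullbackCone.mk (π ▷ X) (fst P X) (by simp))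
    (PullbackCone.IsLimit.mk _ (fun s => lift s.snd (s.fst ≫ snd Y X)) ?_ ?_ ?_)
  · intro s
    ext
    · simp [s.condition]
    · simp
  · intro s
    simp
  · intro s m h₁ h₂
    ext
    · simpa using h₂
    · simp [← h₁]

abbrev overFst (X : 𝒞) {Y B : 𝒞} (g : Y ⟶ B) : Over.mk (fst Y X ≫ g) ⟶ Over.mk g :=
  Over.homMk (fst Y X)

theorem orthogonalTo_iff_bijective_comp_overFst {B : 𝒞} (Z : Over B) (X : 𝒞) :
    OrthogonalTo Z.hom X ↔
      ∀ (Y : 𝒞) (g : Y ⟶ B), Function.Bijective fun h : Over.mk g ⟶ Z => overFst X g ≫ h := by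
  constructor
  · intro hZ Y g
    constructor
    · intro h₁ h₂ h
      ext
      obtain ⟨_, _, hunique⟩ := hZ Y (fst Y X ≫ h₁.left) g (by simp)
      exact (hunique _ ⟨rfl, by simp⟩).trans
        (hunique _ ⟨congrArg CommaMorphism.left h.symm, by simp⟩).symm
    · intro u
      obtain ⟨h, ⟨hu, hg⟩, -⟩ := hZ Y u.left g (by simp)
      exact ⟨Over.homMk h hg, by ext; simpa using hu⟩
  · intro hZ Y u g hu
    obtain ⟨h, hh⟩ := (hZ Y g).2 (Over.homMk u hu)
    refine ⟨h.left, ⟨congrArg CommaMorphism.left hh, by simp⟩, fun h' ⟨hu', hg'⟩ => ?_⟩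
    refine congrArg CommaMorphism.left ((hZ Y g).1 (?_ : overFst X g ≫ Over.homMk h' hg' = _))
    rw [hh]
    ext
    simpa using hu'

variable [HasPullbacks 𝒞]

noncomputable def pullbackOverFstIso (X : 𝒞) {Y B C : 𝒞} (g : Y ⟶ C) (f : B ⟶ C) :
    Over.mk (fst (pullback g f) X ≫ pullback.snd g f) ≅
      (Over.pullback f).obj (Over.mk (fst Y X ≫ g)) :=
  Over.isoMk ((isPullback_whiskerRight_fst (pullback.fst g f) X).paste_vert
    (.of_hasPullback g f)).isoPullback (by simp)

theorem pullbackOverFstIso_hom_comp_map_overFst (X : 𝒞) {Y B C : 𝒞} (g : Y ⟶ C)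
    (f : B ⟶ C) :
    (pullbackOverFstIso X g f).hom ≫ (Over.pullback f).map (overFst X g) =
      overFst X (pullback.snd g f) := by
  ext
  apply pullback.hom_ext <;> simp [pullbackOverFstIso, pullback.lift_fst, pullback.lift_snd]

end

theorem statement_13_general {𝒞 : Type u} [Category.{v} 𝒞] [CartesianMonoidalCategory 𝒞]
    [HasPullbacks 𝒞]
    {A B C : 𝒞} (p : A ⟶ B) (f : B ⟶ C)
    (Pi : Over B ⥤ Over C) (adj : Over.pullback f ⊣ Pi)
    (X : 𝒞) (hp : OrthogonalTo p X) :
    OrthogonalTo (Pi.obj (Over.mk p)).hom X := by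
  rw [orthogonalTo_iff_bijective_comp_overFst]
  intro Y g
  rw [← adj.map_comp_bijective_iff, ← (pullbackOverFstIso X g f).bijective_comp_iff
    (pullbackOverFstIso_hom_comp_map_overFst X g f)]
  exact (orthogonalTo_iff_bijective_comp_overFst (Over.mk p) X).1 hp _ _

/-- In a locally cartesian closed category with finite products, if `p : A ⟶ B` is
orthogonal to `X` and `f : B ⟶ C`, then the dependent product `Π_f(p)`, i.e. the
structure morphism of the image of `p` under the right adjoint `Π_f` of the pullback
functor `f*`, is orthogonal to `X`. -/
theorem statement_13 {𝒞 : Type u} [Category.{v} 𝒞] [CartesianMonoidalCategory 𝒞]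
    [HasPullbacks 𝒞]
    (lcc : ∀ {Y Z : 𝒞} (g : Y ⟶ Z), (Over.pullback g).IsLeftAdjoint)
    {A B C : 𝒞} (p : A ⟶ B) (f : B ⟶ C)
    (Pi : Over B ⥤ Over C) (adj : Over.pullback f ⊣ Pi)
    (X : 𝒞) (hp : OrthogonalTo p X) :
    OrthogonalTo (Pi.obj (Over.mk p)).hom X :=
  statement_13_general p f Pi adj X hp
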